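/- If a monic integer polynomial p has all roots on or inside the unit circle and p(0) ≠ 0, then every root of p is a root of unity (Kronecker's theorem), and consequently m(p) = 0. -/

import Mathlib

/-!
A monic polynomial whose roots all lie in the closed unit disc has Mahler measure
`|lc p| * ∏ max 1 |α| = 1`. For an integer polynomial this forces every nonzero root to be a
root of unity (Kronecker: all conjugates of such a root are algebraic integers of absolute
value at most `1`), and `p(0) ≠ 0` rules out the root `0`.
-/

noncomputable def logMahler (p : Polynomial ℂ) : ℝ :=
  ∫ t in (0:ℝ)..1, Real.log ‖p.eval (Complex.exp (2 * Real.pi * Complex.I * t))‖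

open Polynomial Real

theorem logMahler_eq_logMahlerMeasure (p : ℂ[X]) : logMahler p = p.logMahlerMeasure := by
  have hcirc (t : ℝ) : Complex.exp (2 * π * Complex.I * t) = circleMap 0 1 (2 * π * t) := by
    simp only [circleMap, zero_add, Complex.ofReal_one, one_mul]
    congr 1
    push_cast
    ring
  simp_rw [logMahler, hcirc, logMahlerMeasure_def, circleAverage_def,
    intervalIntegral.integral_comp_mul_left (fun θ => log ‖eval (circleMap 0 1 θ) p‖)
      (mul_ne_zero two_ne_zero pi_ne_zero), mul_zero, mul_one]

namespace Polynomial.Monic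

variable {p : ℂ[X]}

theorem logMahlerMeasure_eq_zero_of_roots_norm_le_one (hp : p.Monic)
    (hroots : ∀ z ∈ p.roots, ‖z‖ ≤ 1) : p.logMahlerMeasure = 0 := by
  rw [logMahlerMeasure_eq_log_leadingCoeff_add_sum_log_roots, hp.leadingCoeff, norm_one,
    log_one, zero_add]
  refine Multiset.sum_eq_zero fun x hx => ?_
  obtain ⟨z, hz, rfl⟩ := Multiset.mem_map.mp hx
  exact (posLog_eq_zero_iff _).mpr (by simpa using hroots z hz)

theorem mahlerMeasure_eq_one_of_roots_norm_le_one (hp : p.Monic)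
    (hroots : ∀ z ∈ p.roots, ‖z‖ ≤ 1) : p.mahlerMeasure = 1 :=
  eq_one_of_pos_of_log_eq_zero (mahlerMeasure_pos_of_ne_zero hp.ne_zero)
    (logMahlerMeasure_eq_log_MahlerMeasure (p := p) ▸
      hp.logMahlerMeasure_eq_zero_of_roots_norm_le_one hroots)

end Polynomial.Monic

theorem stmt3 (p : Polynomial ℤ) (hmonic : p.Monic) (h0 : p.coeff 0 ≠ 0)
    (hroots : ∀ z : ℂ, (p.map (Int.castRingHom ℂ)).IsRoot z → ‖z‖ ≤ 1) :
    (∀ z : ℂ, (p.map (Int.castRingHom ℂ)).IsRoot z → ∃ n : ℕ, 0 < n ∧ z ^ n = 1) ∧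
    logMahler (p.map (Int.castRingHom ℂ)) = 0 := by
  have hP : (p.map (Int.castRingHom ℂ)).Monic := hmonic.map _
  have hroots' : ∀ z ∈ (p.map (Int.castRingHom ℂ)).roots, ‖z‖ ≤ 1 :=
    fun z hz => hroots z (isRoot_of_mem_roots hz)
  refine ⟨fun z hz => ?_, ?_⟩
  · have hz0 : z ≠ 0 := by
      rintro rfl
      exact h0 (by simpa [coeff_zero_eq_eval_zero, eval_map] using hz)
    exact pow_eq_one_of_mahlerMeasure_eq_one
      (hP.mahlerMeasure_eq_one_of_roots_norm_le_one hroots') hz0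
      (by rw [mem_aroots]; exact ⟨hmonic.ne_zero, by rwa [aeval_def, eval₂_eq_eval_map]⟩)
  · rw [logMahler_eq_logMahlerMeasure, hP.logMahlerMeasure_eq_zero_of_roots_norm_le_one hroots']
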